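/- Consider an arrangement on the flat 2-torus of n−2 geodesics of class (1,0), one geodesic of class (a,1) with 0 ≤ a ≤ n−2, and one geodesic of class (0,1), positioned so that every intersection point of the (a,1)-geodesic with the (0,1)-geodesic also lies on one of the (1,0)-geodesics. Then the complement of the union of these n geodesics has exactly 2n−4 regions. -/

import Mathlib

noncomputable section

/-- The flat two-dimensional torus `ℝ²/ℤ²`. -/
abbrev Torus : Type := AddCircle (1 : ℝ) × AddCircle (1 : ℝ)

/-- The quotient projection `ℝ² → ℝ²/ℤ²`. -/
def torusProj (v : ℝ × ℝ) : Torus :=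
  ((v.1 : AddCircle (1 : ℝ)), (v.2 : AddCircle (1 : ℝ)))

/-- A vector `(p, q) ∈ ℤ²` is primitive if `gcd(p, q) = 1`. -/
def IsPrimitive (v : ℤ × ℤ) : Prop := Int.gcd v.1 v.2 = 1

/-- The closed geodesic on the torus through (the class of) `b` in direction `v`. -/
def geodesic (b : ℝ × ℝ) (v : ℤ × ℤ) : Set Torus :=
  Set.range (fun t : ℝ => torusProj (b.1 + t * (v.1 : ℝ), b.2 + t * (v.2 : ℝ)))

/-- The number of connected components of the complement of `S`. -/
def regionCount {X : Type*} [TopologicalSpace X] (S : Set X) : ℕ :=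
  Nat.card (ConnectedComponents ↥(Sᶜ))

/-- An arrangement of `n` distinct closed geodesics, given by base points `b`
and primitive direction vectors `v`. -/
def IsArrangement {n : ℕ} (b : Fin n → ℝ × ℝ) (v : Fin n → ℤ × ℤ) : Prop :=
  (∀ i, IsPrimitive (v i)) ∧ Function.Injective (fun i => geodesic (b i) (v i))

/-- Two geodesics are parallel iff their homology classes agree up to sign. -/
def Parallel (v w : ℤ × ℤ) : Prop := v = w ∨ v = -w

/-!
The `n - 2` horizontal geodesics cut the torus into `n - 2` open annuli, one over each arc of the
circle minus their heights. Over such an arc the geodesic `x = c₁ + a (s - c₂)` never meets the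
vertical one `x = d₁` (they meet only on horizontal geodesics), so the two cut every horizontal
circle of the annulus into two open intervals and the annulus into two regions. Labelling a point
of the complement by its arc and its side of the slanted geodesic gives a locally constant map
whose fibres are connected, being continuous images of regions between two graphs over an
interval; so the regions are exactly these `2 (n - 2)` fibres.
-/

open Set Filter Topology Function

theorem natCard_connectedComponents_eq_natCard_range {X ι : Type*} [TopologicalSpace X]
    {g : X → ι} (hg : IsLocallyConstant g) (hfib : ∀ x, IsPreconnected (g ⁻¹' {g x})) :
    Nat.card (ConnectedComponents X) = Nat.card (range g) := by
  have hker : ∀ x x', connectedComponent x = connectedComponent x' ↔ g x = g x' := fun x x' =>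
    ⟨fun h => hg.apply_eq_of_isPreconnected isPreconnected_connectedComponent
        mem_connectedComponent (h ▸ mem_connectedComponent),
      fun h => connectedComponent_eq ((hfib x).subset_connectedComponent rfl h.symm)⟩
  exact Nat.card_congr ((Quotient.congrRight hker).trans (Setoid.quotientKerEquivRange g))

theorem isPreconnected_regionBetween {α : Type*} [TopologicalSpace α] {f g : α → ℝ}
    {s : Set α} (hs : IsPreconnected s) (hf : ContinuousOn f s) (hg : ContinuousOn g s)
    (hfg : ∀ x ∈ s, f x < g x) : IsPreconnected (regionBetween f g s) := by
  have himage : regionBetween f g s =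
      (fun w : α × ℝ => (w.1, f w.1 + w.2 * (g w.1 - f w.1))) '' s ×ˢ Ioo 0 1 := by
    ext ⟨x, z⟩
    constructor
    · rintro ⟨hx, hfz, hzg⟩
      have hpos : 0 < g x - f x := by linarith
      refine ⟨(x, (z - f x) / (g x - f x)), ⟨hx, div_pos (by linarith) hpos,
        (div_lt_one hpos).2 (by linarith)⟩, ?_⟩
      simp only [Prod.mk.injEq, true_and]
      field_simp
      ring
    · rintro ⟨⟨x, t⟩, ⟨hx, ht₀, ht₁⟩, h⟩
      simp only [Prod.mk.injEq] at h
      obtain ⟨rfl, rfl⟩ := h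
      have := hfg x hx
      exact ⟨hx, by nlinarith, by nlinarith⟩
  rw [himage]
  refine (hs.prod isPreconnected_Ioo).image _ (ContinuousOn.prodMk continuousOn_fst ?_)
  have hf' : ContinuousOn (fun w : α × ℝ => f w.1) (s ×ˢ Ioo 0 1) :=
    hf.comp continuousOn_fst fun _ h => h.1
  have hg' : ContinuousOn (fun w : α × ℝ => g w.1) (s ×ˢ Ioo 0 1) :=
    hg.comp continuousOn_fst fun _ h => h.1
  exact hf'.add (continuousOn_snd.mul (hg'.sub hf'))

namespace AddCircle

variable {p : ℝ} [Fact (0 < p)]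

def ccwDist (y s : AddCircle p) : ℝ := equivIco p 0 (s - y)

lemma ccwDist_mem_Ico (y s : AddCircle p) : ccwDist y s ∈ Ico 0 p := by
  simpa [ccwDist] using (equivIco p 0 (s - y)).2

lemma coe_ccwDist (y s : AddCircle p) : (ccwDist y s : AddCircle p) = s - y :=
  (equivIco p 0).symm_apply_apply _

@[simp] lemma add_coe_ccwDist (y s : AddCircle p) : y + (ccwDist y s : AddCircle p) = s := by
  rw [coe_ccwDist]
  abel

lemma ccwDist_eq_iff {y s : AddCircle p} {r : ℝ} (hr : r ∈ Ico 0 p) :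
    ccwDist y s = r ↔ (r : AddCircle p) = s - y := by
  refine ⟨fun h => h ▸ coe_ccwDist y s, fun h => ?_⟩
  rw [ccwDist, ← h, equivIco_coe_eq (by simpa using hr)]

lemma ccwDist_add_coe (y : AddCircle p) {r : ℝ} (hr : r ∈ Ico 0 p) :
    ccwDist y (y + r) = r :=
  (ccwDist_eq_iff hr).2 (by abel)

lemma ccwDist_eq_zero {y s : AddCircle p} : ccwDist y s = 0 ↔ s = y := by
  rw [ccwDist_eq_iff ⟨le_rfl, Fact.out⟩, QuotientAddGroup.mk_zero, eq_comm, sub_eq_zero]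

lemma ccwDist_pos {y s : AddCircle p} (h : s ≠ y) : 0 < ccwDist y s :=
  (ccwDist_mem_Ico y s).1.lt_of_ne' (ccwDist_eq_zero.not.2 h)

lemma ccwDist_left_injective (s : AddCircle p) : Injective (ccwDist · s) := fun y y' h => by
  simpa [coe_ccwDist] using congrArg ((↑) : ℝ → AddCircle p) h

lemma ccwDist_right_injective (y : AddCircle p) : Injective (ccwDist y) := fun s s' h => by
  simpa [coe_ccwDist] using congrArg ((↑) : ℝ → AddCircle p) h

lemma continuousAt_ccwDist {y s : AddCircle p} (h : s ≠ y) : ContinuousAt (ccwDist y) s :=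
  continuous_subtype_val.continuousAt.comp <|
    (continuousAt_equivIco p 0 (by simpa [sub_eq_zero] using h)).comp
      (continuous_sub_right y).continuousAt

lemma ccwDist_eq_sub_of_lt {y z s : AddCircle p} (h : ccwDist y z < ccwDist y s) :
    ccwDist z s = ccwDist y s - ccwDist y z := by
  obtain ⟨hs₀, hs₁⟩ := ccwDist_mem_Ico y s
  obtain ⟨hz₀, hz₁⟩ := ccwDist_mem_Ico y z
  rw [ccwDist_eq_iff ⟨by linarith, by linarith⟩, coe_sub, coe_ccwDist, coe_ccwDist]
  abel

lemma ccwDist_eq_sub_add_of_gt {y z s : AddCircle p} (h : ccwDist y s < ccwDist y z) :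
    ccwDist z s = ccwDist y s - ccwDist y z + p := by
  obtain ⟨hs₀, hs₁⟩ := ccwDist_mem_Ico y s
  obtain ⟨hz₀, hz₁⟩ := ccwDist_mem_Ico y z
  rw [ccwDist_eq_iff ⟨by linarith, by linarith⟩, coe_add, coe_sub, coe_ccwDist, coe_ccwDist,
    coe_period]
  abel

variable (Y : Finset (AddCircle p)) (hY : Y.Nonempty)

def arcStart (s : AddCircle p) : AddCircle p :=
  Classical.choose (Y.exists_min_image (ccwDist · s) hY)

lemma arcStart_mem (s : AddCircle p) : arcStart Y hY s ∈ Y :=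
  (Classical.choose_spec (Y.exists_min_image (ccwDist · s) hY)).1

lemma ccwDist_arcStart_le {y : AddCircle p} (hy : y ∈ Y) (s : AddCircle p) :
    ccwDist (arcStart Y hY s) s ≤ ccwDist y s :=
  (Classical.choose_spec (Y.exists_min_image (ccwDist · s) hY)).2 y hy

lemma ccwDist_arcStart_lt {y s : AddCircle p} (hy : y ∈ Y) (hys : y ≠ arcStart Y hY s) :
    ccwDist (arcStart Y hY s) s < ccwDist y s :=
  (ccwDist_arcStart_le Y hY hy s).lt_of_ne fun h => hys (ccwDist_left_injective s h).symm

lemma eventually_arcStart_eq (s : AddCircle p) (hs : s ∉ Y) :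
    ∀ᶠ s' in 𝓝 s, arcStart Y hY s' = arcStart Y hY s := by
  set y := arcStart Y hY s
  have hnear : ∀ᶠ s' in 𝓝 s, ∀ z ∈ Y, z ≠ y → ccwDist y s' < ccwDist z s' := by
    refine (eventually_all_finset Y).2 fun z hz => ?_
    by_cases hzy : z = y
    · exact .of_forall fun _ h => absurd hzy h
    · have hsz : s ≠ z := fun h => hs (h ▸ hz)
      have hsy : s ≠ y := fun h => hs (h ▸ arcStart_mem Y hY s)
      exact ((continuousAt_ccwDist hsy).eventually_lt (continuousAt_ccwDist hsz)
        (ccwDist_arcStart_lt Y hY hz hzy)).mono fun _ h _ => h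
  filter_upwards [hnear] with s' hs'
  by_contra hne
  exact (ccwDist_arcStart_le Y hY (arcStart_mem Y hY s) s').not_gt
    (hs' _ (arcStart_mem Y hY s') hne)

/-- The arc of the circle minus `Y` that starts at `y`, parametrised by the counterclockwise
distance from `y`. -/
def arc (y : AddCircle p) : Set ℝ :=
  {r | 0 < r ∧ r < p ∧ ∀ z ∈ Y, z ≠ y → r < ccwDist y z}

lemma ordConnected_arc (y : AddCircle p) : (arc Y y).OrdConnected :=
  ⟨fun _ ha _ hb _ hr => ⟨ha.1.trans_le hr.1, hr.2.trans_lt hb.2.1,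
    fun z hz hzy => hr.2.trans_lt (hb.2.2 z hz hzy)⟩⟩

lemma arc_nonempty (y : AddCircle p) : (arc Y y).Nonempty := by
  have hgap : ∀ᶠ r in 𝓝[>] (0 : ℝ), ∀ z ∈ Y, z ≠ y → r < ccwDist y z :=
    (eventually_all_finset Y).2 fun z _ => by
      by_cases hzy : z = y
      · exact .of_forall fun _ h => absurd hzy h
      · exact (eventually_nhdsWithin_of_eventually_nhds
          (eventually_lt_nhds (ccwDist_pos hzy))).mono fun _ h _ => h
  have hsmall : ∀ᶠ r in 𝓝[>] (0 : ℝ), 0 < r ∧ r < p :=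
    eventually_mem_nhdsWithin.and
      (eventually_nhdsWithin_of_eventually_nhds (eventually_lt_nhds Fact.out))
  obtain ⟨r, ⟨hr₀, hrp⟩, hgap⟩ := (hsmall.and hgap).exists
  exact ⟨r, hr₀, hrp, hgap⟩

lemma ccwDist_mem_arc_iff {y : AddCircle p} (hy : y ∈ Y) (s : AddCircle p) :
    ccwDist y s ∈ arc Y y ↔ s ∉ Y ∧ arcStart Y hY s = y := by
  obtain ⟨-, hlt⟩ := ccwDist_mem_Ico y s
  constructor
  · rintro ⟨hpos, -, hgap⟩
    have hsy : s ≠ y := fun h => hpos.ne' (ccwDist_eq_zero.2 h)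
    refine ⟨fun hs => (hgap s hs hsy).false, ?_⟩
    by_contra hne
    have hwrap := ccwDist_eq_sub_add_of_gt (hgap _ (arcStart_mem Y hY s) hne)
    have hlt' := (ccwDist_mem_Ico y (arcStart Y hY s)).2
    have hmin := ccwDist_arcStart_le Y hY hy s
    linarith
  · rintro ⟨hs, rfl⟩
    have hsy : s ≠ arcStart Y hY s := fun h => hs (h ▸ arcStart_mem Y hY s)
    refine ⟨ccwDist_pos hsy, hlt, fun z hz hzy => ?_⟩
    by_contra hle
    have hzs := (not_lt.1 hle).lt_of_ne fun h =>
      (ne_of_mem_of_not_mem hz hs) (ccwDist_right_injective _ h)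
    have hsub := ccwDist_eq_sub_of_lt hzs
    have hpos := ccwDist_pos hzy
    have hmin := ccwDist_arcStart_lt Y hY hz hzy
    linarith

lemma add_coe_notMem_of_mem_arc {y : AddCircle p} (hy : y ∈ Y) {r : ℝ} (hr : r ∈ arc Y y) :
    y + (r : AddCircle p) ∉ Y :=
  ((ccwDist_mem_arc_iff Y ⟨y, hy⟩ hy _).1 (by rwa [ccwDist_add_coe y ⟨hr.1.le, hr.2.1⟩])).1

end AddCircle

section Arrangement

open AddCircle

variable {p q : ℝ} [Fact (0 < p)] [Fact (0 < q)]
  (Y : Finset (AddCircle q)) (f : AddCircle q → AddCircle p) (D : AddCircle p)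

def graphArrangement : Set (AddCircle p × AddCircle q) :=
  {z | z.2 ∈ Y} ∪ {z | z.1 = f z.2} ∪ {z | z.1 = D}

variable (hY : Y.Nonempty)

/-- The arc of the circle minus `Y` containing the height `z.2`, and the side of the graph of `f`
on which `z` lies once the horizontal circle through `z` is cut open at `D`. -/
def regionLabel (z : AddCircle p × AddCircle q) : AddCircle q × Bool :=
  (arcStart Y hY z.2, decide (ccwDist D z.1 < ccwDist D (f z.2)))

def graphOffset (y : AddCircle q) (r : ℝ) : ℝ := ccwDist D (f (y + r))

def sideRegion (y : AddCircle q) (b : Bool) : Set (ℝ × ℝ) :=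
  regionBetween (cond b 0 (graphOffset f D y)) (cond b (graphOffset f D y) fun _ => p) (arc Y y)

variable {Y f D}

lemma eventually_regionLabel_eq (hf : Continuous f) (hfD : ∀ s, f s = D → s ∈ Y)
    {z : AddCircle p × AddCircle q} (hz : z ∉ graphArrangement Y f D) :
    ∀ᶠ w in 𝓝 z, regionLabel Y f D hY w = regionLabel Y f D hY z := by
  simp only [graphArrangement, mem_union, mem_ofPred_eq, not_or] at hz
  obtain ⟨⟨hzY, hzf⟩, hzD⟩ := hz
  have harc : ∀ᶠ w in 𝓝 z, arcStart Y hY w.2 = arcStart Y hY z.2 :=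
    continuousAt_snd.eventually (eventually_arcStart_eq Y hY z.2 hzY)
  have hx : ContinuousAt (fun w => ccwDist D w.1) z :=
    (continuousAt_ccwDist hzD).comp continuousAt_fst
  have hgraph : ContinuousAt (fun w => ccwDist D (f w.2)) z :=
    ContinuousAt.comp (g := ccwDist D) (continuousAt_ccwDist fun h => hzY (hfD _ h))
      (hf.comp continuous_snd).continuousAt
  have hside : ∀ᶠ w in 𝓝 z,
      (ccwDist D w.1 < ccwDist D (f w.2) ↔ ccwDist D z.1 < ccwDist D (f z.2)) := by
    rcases ((ccwDist_right_injective D).ne hzf).lt_or_gt with h | h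
    · filter_upwards [hx.eventually_lt hgraph h] with w hw
      exact iff_of_true hw h
    · filter_upwards [hgraph.eventually_lt hx h] with w hw
      exact iff_of_false hw.not_gt h.not_gt
  filter_upwards [harc, hside] with w harc hside
  simp only [regionLabel, harc, hside]

lemma mem_regionLabel_fiber_iff {y : AddCircle q} (hy : y ∈ Y) (b : Bool)
    (z : AddCircle p × AddCircle q) :
    z ∉ graphArrangement Y f D ∧ regionLabel Y f D hY z = (y, b) ↔
      (ccwDist y z.2, ccwDist D z.1) ∈ sideRegion Y f D y b := by
  have hD : z.1 ≠ D ↔ 0 < ccwDist D z.1 :=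
    ⟨ccwDist_pos, fun h h' => h.ne' (ccwDist_eq_zero.2 h')⟩
  have hx := (ccwDist_mem_Ico D z.1).2
  have hF := (ccwDist_mem_Ico D (f z.2)).1
  have hG : graphOffset f D y (ccwDist y z.2) = ccwDist D (f z.2) := by
    simp only [graphOffset, add_coe_ccwDist]
  simp only [graphArrangement, regionLabel, sideRegion, regionBetween, mem_union,
    mem_ofPred_eq, not_or, Prod.mk.injEq, hD, ← (ccwDist_right_injective D).ne_iff,
    ccwDist_mem_arc_iff Y hY hy]
  cases b <;> simp only [cond_true, cond_false, Pi.zero_apply, hG, mem_Ioo, decide_eq_true_eq,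
    decide_eq_false_iff_not] <;> grind

lemma regionLabel_fiber_eq_image {y : AddCircle q} (hy : y ∈ Y) (b : Bool) :
    (graphArrangement Y f D)ᶜ ∩ regionLabel Y f D hY ⁻¹' {(y, b)} =
      (fun w : ℝ × ℝ => (D + (w.2 : AddCircle p), y + (w.1 : AddCircle q))) ''
        sideRegion Y f D y b := by
  ext z
  rw [mem_inter_iff, mem_compl_iff, mem_preimage, mem_singleton_iff,
    mem_regionLabel_fiber_iff hY hy]
  constructor
  · exact fun h => ⟨_, h, by simp only [add_coe_ccwDist]⟩
  · rintro ⟨⟨r, x⟩, hw, rfl⟩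
    obtain ⟨⟨hr₀, hr₁, hgap⟩, hx₀, hx₁⟩ := hw
    have hF := ccwDist_mem_Ico D (f (y + r))
    have hx : x ∈ Ico 0 p := by
      cases b <;> simp only [cond_true, cond_false, Pi.zero_apply, graphOffset] at hx₀ hx₁ <;>
        constructor <;> linarith [hF.1, hF.2]
    rw [ccwDist_add_coe y ⟨hr₀.le, hr₁⟩, ccwDist_add_coe D hx]
    exact ⟨⟨hr₀, hr₁, hgap⟩, hx₀, hx₁⟩

variable (hf : Continuous f) (hfD : ∀ s, f s = D → s ∈ Y)
include hfD

lemma graphOffset_pos {y : AddCircle q} (hy : y ∈ Y) {r : ℝ} (hr : r ∈ arc Y y) :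
    0 < graphOffset f D y r :=
  ccwDist_pos fun h => add_coe_notMem_of_mem_arc Y hy hr (hfD _ h)

lemma sideRegion_lower_lt_upper {y : AddCircle q} (hy : y ∈ Y) (b : Bool) {r : ℝ}
    (hr : r ∈ arc Y y) :
    cond b 0 (graphOffset f D y) r < cond b (graphOffset f D y) (fun _ => p) r := by
  cases b
  · exact (ccwDist_mem_Ico _ _).2
  · exact graphOffset_pos hfD hy hr

lemma sideRegion_nonempty {y : AddCircle q} (hy : y ∈ Y) (b : Bool) :
    (sideRegion Y f D y b).Nonempty := by
  obtain ⟨r, hr⟩ := arc_nonempty Y y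
  have hlt := sideRegion_lower_lt_upper hfD hy b hr
  exact ⟨(r, _), hr, left_lt_add_div_two.2 hlt, add_div_two_lt_right.2 hlt⟩

include hf

lemma isPreconnected_sideRegion {y : AddCircle q} (hy : y ∈ Y) (b : Bool) :
    IsPreconnected (sideRegion Y f D y b) := by
  have hcont : ContinuousOn (graphOffset f D y) (arc Y y) := fun r hr =>
    (ContinuousAt.comp (g := ccwDist D) (f := fun r : ℝ => f (y + r))
      (continuousAt_ccwDist fun h => add_coe_notMem_of_mem_arc Y hy hr (hfD _ h))
      (hf.comp ((continuous_const_add y).comp (AddCircle.continuous_mk' q))).continuousAt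
      ).continuousWithinAt
  refine isPreconnected_regionBetween (ordConnected_arc Y y).isPreconnected ?_ ?_
    fun r hr => sideRegion_lower_lt_upper hfD hy b hr
  · cases b
    exacts [hcont, continuousOn_const]
  · cases b
    exacts [continuousOn_const, hcont]

include hY in
theorem natCard_connectedComponents_compl_graphArrangement :
    Nat.card (ConnectedComponents ↥(graphArrangement Y f D)ᶜ) = 2 * Y.card := by
  set g : ↥(graphArrangement Y f D)ᶜ → AddCircle q × Bool := fun z => regionLabel Y f D hY z
  have hg : IsLocallyConstant g := (IsLocallyConstant.iff_eventually_eq g).2 fun z =>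
    continuous_subtype_val.continuousAt.eventually (eventually_regionLabel_eq hY hf hfD z.2)
  have hfiber : ∀ y ∈ Y, ∀ b, Subtype.val '' (g ⁻¹' {(y, b)}) =
      (fun w : ℝ × ℝ => (D + (w.2 : AddCircle p), y + (w.1 : AddCircle q))) ''
        sideRegion Y f D y b := fun y hy b => by
    rw [← regionLabel_fiber_eq_image hY hy b]
    exact Subtype.image_preimage_coe (graphArrangement Y f D)ᶜ
      (regionLabel Y f D hY ⁻¹' {(y, b)})
  have hfib : ∀ z, IsPreconnected (g ⁻¹' {g z}) := fun z => by
    have hy : (g z).1 ∈ Y := arcStart_mem Y hY _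
    rw [← Topology.IsInducing.subtypeVal.isPreconnected_image,
      show g z = ((g z).1, (g z).2) from rfl, hfiber _ hy]
    exact (isPreconnected_sideRegion hf hfD hy _).image _ (by fun_prop)
  have hrange : range g = (Y : Set (AddCircle q)) ×ˢ univ := by
    ext ⟨y, b⟩
    constructor
    · rintro ⟨z, hz⟩
      rw [← hz]
      exact ⟨arcStart_mem Y hY _, trivial⟩
    · rintro ⟨hy, -⟩
      obtain ⟨-, z, hz, -⟩ := hfiber y hy b ▸ (sideRegion_nonempty hfD hy b).image
        (fun w : ℝ × ℝ => (D + (w.2 : AddCircle p), y + (w.1 : AddCircle q)))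
      exact ⟨z, hz⟩
  rw [natCard_connectedComponents_eq_natCard_range hg hfib, hrange]
  simp [mul_comm]

end Arrangement

lemma geodesic_one_zero (b : ℝ × ℝ) : geodesic b (1, 0) = {z : Torus | z.2 = b.2} := by
  ext ⟨x, s⟩
  simp only [geodesic, torusProj, mem_range, mem_ofPred_eq, Prod.mk.injEq]
  constructor
  · rintro ⟨t, -, rfl⟩
    simp
  · rintro rfl
    induction x using QuotientAddGroup.induction_on with | H x =>
    exact ⟨x - b.1, by simp, by simp⟩

lemma geodesic_int_one (c : ℝ × ℝ) (a : ℤ) :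
    geodesic c (a, 1) = {z : Torus | z.1 = c.1 + a • (z.2 - c.2)} := by
  have hline : ∀ t : ℝ, ((c.1 + t * a : ℝ) : AddCircle (1 : ℝ)) =
      c.1 + a • (((c.2 + t * ((1 : ℤ) : ℝ) : ℝ) : AddCircle (1 : ℝ)) - c.2) := fun t => by
    rw [← AddCircle.coe_sub, ← AddCircle.coe_zsmul, ← AddCircle.coe_add]
    congr 1
    simp [zsmul_eq_mul]
    ring
  ext ⟨x, s⟩
  simp only [geodesic, torusProj, mem_range, mem_ofPred_eq, Prod.mk.injEq]
  constructor
  · rintro ⟨t, rfl, rfl⟩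
    exact hline t
  · intro h
    induction s using QuotientAddGroup.induction_on with | H s =>
    refine ⟨s - c.2, ?_, by simp⟩
    rw [h, hline]
    simp

lemma geodesic_zero_one (d : ℝ × ℝ) : geodesic d (0, 1) = {z : Torus | z.1 = d.1} := by
  simpa using geodesic_int_one d 0

theorem stmt9_general (n : ℕ) (hn : 3 ≤ n) (b : Fin (n - 2) → ℝ × ℝ) (c d : ℝ × ℝ)
    (a : ℤ)
    (hinj : Function.Injective (fun i => geodesic (b i) ((1 : ℤ), (0 : ℤ))))
    (hinc : geodesic c (a, 1) ∩ geodesic d (0, 1) ⊆ ⋃ i, geodesic (b i) (1, 0)) :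
    regionCount ((⋃ i, geodesic (b i) (1, 0)) ∪ geodesic c (a, 1) ∪ geodesic d (0, 1)) =
      2 * n - 4 := by
  set Y : Finset (AddCircle (1 : ℝ)) := Finset.univ.image fun i => ((b i).2 : AddCircle (1 : ℝ))
  have hYcard : Y.card = n - 2 := by
    refine (Finset.card_image_of_injective _ fun i j h => hinj ?_).trans (Finset.card_fin _)
    simp only [geodesic_one_zero, h]
  have hY : Y.Nonempty := Finset.card_pos.1 (by omega)
  have hhoriz : ⋃ i, geodesic (b i) (1, 0) = {z : Torus | z.2 ∈ Y} := by
    ext z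
    simp [geodesic_one_zero, Y, eq_comm]
  have hfD : ∀ s, (c.1 : AddCircle (1 : ℝ)) + a • (s - c.2) = d.1 → s ∈ Y := fun s hs => by
    have hmem : ((d.1 : AddCircle (1 : ℝ)), s) ∈ geodesic c (a, 1) ∩ geodesic d (0, 1) := by
      simp [geodesic_int_one, hs]
    simpa [hhoriz] using hinc hmem
  have hcount := natCard_connectedComponents_compl_graphArrangement hY (by fun_prop) hfD
  rw [regionCount, hhoriz, geodesic_int_one, geodesic_zero_one]
  exact hcount.trans (by omega)

/-- The arrangement of `n-2` geodesics of class `(1,0)`, one of class `(a,1)`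
and one of class `(0,1)`, with all intersection points of the last two lying on
the first `n-2` geodesics, has exactly `2n - 4` regions. -/
theorem stmt9 (n : ℕ) (hn : 3 ≤ n) (b : Fin (n - 2) → ℝ × ℝ) (c d : ℝ × ℝ)
    (a : ℤ) (ha0 : 0 ≤ a) (ha1 : a ≤ (n : ℤ) - 2)
    (hinj : Function.Injective (fun i => geodesic (b i) ((1 : ℤ), (0 : ℤ))))
    (hcd : geodesic c (a, 1) ≠ geodesic d (0, 1))
    (hc : ∀ i, geodesic (b i) (1, 0) ≠ geodesic c (a, 1))
    (hd : ∀ i, geodesic (b i) (1, 0) ≠ geodesic d (0, 1))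
    (hinc : geodesic c (a, 1) ∩ geodesic d (0, 1) ⊆ ⋃ i, geodesic (b i) (1, 0)) :
    regionCount ((⋃ i, geodesic (b i) (1, 0)) ∪ geodesic c (a, 1) ∪ geodesic d (0, 1)) =
      2 * n - 4 :=
  stmt9_general n hn b c d a hinj hinc
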